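/- Assume MD, SCD*, and the boundary assumptions. Suppose the nonempty bundle b_r satisfies t_{b_r} < t_b for every nonempty bundle b ≠ b_r and φ(b,t1) < φ(b_r,t1) for every bundle b with ¬(b_r ⊆ b); and suppose φ(b_1,t1) < φ(b_2,t1) whenever b_r ⊆ b_1 ⊊ b_2 ⊆ b*. Assume further: (1) there is a good i ∉ b_r such that φ(b*\{i},t1) > φ(b*\{j},t1) for every good j ≠ i, and φ(b_r∪{i},t1) < φ(b_r∪{j},t1) for every good j ∉ b_r with j ≠ i; (2) there exist λ1, λ2, μ1, μ2 ∈ (0,1) with φ(b_r∪{i},t1) = λ1·φ(b*,t1) + (1−λ1)·φ(b_r,t1), φ(b*\{i},t1) = λ2·φ(b*,t1) + (1−λ2)·φ(b_r,t1), φ(b_r∪{i},t0) = μ1·φ(b*,t0) + (1−μ1)·φ(b_r,t0), φ(b*\{i},t0) = μ2·φ(b*,t0) + (1−μ2)·φ(b_r,t0), satisfying λ1 < λ2 and μ1/λ1 < (μ2−μ1)/(λ2−λ1) < (1−μ2)/(1−λ2); and for every bundle b̃ with b_r ⊊ b̃ ⊊ b* and b̃ ∉ {b_r∪{i}, b*\{i}}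 there exist real numbers λ_b̃, μ_b̃ with φ(b̃,t1) = λ_b̃·φ(b*,t1) + (1−λ_b̃)·φ(b_r,t1) and φ(b̃,t0) = μ_b̃·φ(b*,t0) + (1−μ_b̃)·φ(b_r,t0), such that μ_b̃ > (μ1/λ1)·λ_b̃, μ_b̃ > ((1−μ2)/(1−λ2))·λ_b̃ + (μ2−λ2)/(1−λ2), λ_b̃ ≥ λ1, and μ_b̃ ≤ μ2. Then the minimal optimal menu is a tree menu. -/

import Mathlib

/-!
The root `br` is the first bundle whose virtual value turns positive, and by single crossing it
beats every bundle not containing it from `tz br` on. So `br` is in every optimal menu, and every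
nonempty element of a minimal one contains `br`, because each element of a minimal menu is a best
response at some type.

A bundle missing from an optimal menu is never a strict best response, so by SCD* and the
connectedness of `[t0, t1]` a two-point mixture of other bundles dominates it on all of `[t0, t1]`.
The bundle `insert i br` ties with `br` at a type `τ` where `br` is a best response. The conditions
on the weights `λ`, `μ` say that, in the plane of values at `(t0, t1)`, every other best response at
`τ` lies strictly on one side of the line through `br` and `insert i br`. Hence a dominating
mixture could only put weight on `br`, and `br` does not dominate `insert i br`. The same argument
at the crossing of `univ \ {i}` with `univ` puts `univ \ {i}` into the menu, and it is
incomparable with `insert i br`.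
-/

namespace Paper

abbrev Bundle (n : ℕ) := Finset (Fin n)

variable {n : ℕ}

/-- A stochastic bundle: nonnegative weights on bundles summing to one. -/
def IsStoch (a : Bundle n → ℝ) : Prop :=
  (∀ b, 0 ≤ a b) ∧ ∑ b, a b = 1

/-- The point mass at a bundle, viewed as a stochastic bundle. -/
def pt (b : Bundle n) : Bundle n → ℝ := fun b' => if b' = b then 1 else 0

/-- Virtual value of a stochastic bundle (linear extension). -/
def phiA (φ : Bundle n → ℝ → ℝ) (a : Bundle n → ℝ) (t : ℝ) : ℝ :=
  ∑ b, a b * φ b t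

/-- A function is single-crossing on a set: its sign is monotone there. -/
def SingleCrossingOn (g : ℝ → ℝ) (T : Set ℝ) : Prop :=
  MonotoneOn (fun t => Real.sign (g t)) T ∨ AntitoneOn (fun t => Real.sign (g t)) T

/-- Assumption SCD*: differences of virtual values of stochastic bundles are
single-crossing in the type. -/
def SCDstar (φ : Bundle n → ℝ → ℝ) (t0 t1 : ℝ) : Prop :=
  ∀ a a' : Bundle n → ℝ, IsStoch a → IsStoch a' →
    SingleCrossingOn (fun t => phiA φ a t - phiA φ a' t) (Set.Icc t0 t1)

/-- Assumption MD: differences of virtual values of deterministic bundles are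
monotone in the type. -/
def MD (φ : Bundle n → ℝ → ℝ) (t0 t1 : ℝ) : Prop :=
  ∀ b b' : Bundle n,
    MonotoneOn (fun t => φ b t - φ b' t) (Set.Icc t0 t1) ∨
    AntitoneOn (fun t => φ b t - φ b' t) (Set.Icc t0 t1)

/-- No two distinct bundles have identical virtual value functions on T. -/
def Distinct (φ : Bundle n → ℝ → ℝ) (t0 t1 : ℝ) : Prop :=
  ∀ b b' : Bundle n, b ≠ b' → ∃ t ∈ Set.Icc t0 t1, φ b t ≠ φ b' t

/-- A stochastic bundle is very weakly dominated. -/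
def VWD (φ : Bundle n → ℝ → ℝ) (t0 t1 : ℝ) (a : Bundle n → ℝ) : Prop :=
  ∃ a' : Bundle n → ℝ, IsStoch a' ∧ a' ≠ a ∧
    ∀ t ∈ Set.Icc t0 t1, phiA φ a t ≤ phiA φ a' t

/-- A bundle is a never strict best response. -/
def NeverStrictBR (φ : Bundle n → ℝ → ℝ) (t0 t1 : ℝ) (b : Bundle n) : Prop :=
  ∀ t ∈ Set.Icc t0 t1, ∃ b' : Bundle n, b' ≠ b ∧ φ b t ≤ φ b' t

/-- A menu is optimal if at every type some element attains the upper envelope. -/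
def OptimalMenu (φ : Bundle n → ℝ → ℝ) (t0 t1 : ℝ) (S : Finset (Bundle n)) : Prop :=
  ∀ t ∈ Set.Icc t0 t1, ∃ b ∈ S, ∀ b' : Bundle n, φ b' t ≤ φ b t

/-- A minimal optimal menu. -/
def MinimalOptimalMenu (φ : Bundle n → ℝ → ℝ) (t0 t1 : ℝ) (S : Finset (Bundle n)) : Prop :=
  OptimalMenu φ t0 t1 S ∧ ∀ S' : Finset (Bundle n), S' ⊂ S → ¬ OptimalMenu φ t0 t1 S'

/-- A nested menu: any two elements are comparable under set inclusion. -/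
def IsNestedMenu (S : Finset (Bundle n)) : Prop :=
  ∀ b1 ∈ S, ∀ b2 ∈ S, b1 ⊆ b2 ∨ b2 ⊆ b1

/-- A tree menu: a nonempty root contained in every nonempty element, and two
incomparable elements. -/
def IsTreeMenu (S : Finset (Bundle n)) : Prop :=
  (∃ r ∈ S, r ≠ (∅ : Bundle n) ∧ ∀ b ∈ S, b ≠ (∅ : Bundle n) → r ⊆ b) ∧
  (∃ b1 ∈ S, ∃ b2 ∈ S, ¬ b1 ⊆ b2 ∧ ¬ b2 ⊆ b1)


open Set Filter Topology

theorem _root_.Real.sign_nonneg_iff {x : ℝ} : 0 ≤ Real.sign x ↔ 0 ≤ x := by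
  rcases lt_trichotomy x 0 with h | rfl | h
  · simp [Real.sign_of_neg h, h.not_ge]
  · simp
  · simp [Real.sign_of_pos h, h.le]

section SingleCrossing

variable {g : ℝ → ℝ} {s : Set ℝ} {x y z t0 t1 : ℝ}

theorem SingleCrossingOn.nonneg_up_or_down (hg : SingleCrossingOn g s) :
    (∀ x ∈ s, ∀ y ∈ s, x ≤ y → 0 ≤ g x → 0 ≤ g y) ∨
      (∀ x ∈ s, ∀ y ∈ s, x ≤ y → 0 ≤ g y → 0 ≤ g x) := by
  rcases hg with h | h
  · exact Or.inl fun x hx y hy hxy h0 =>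
      Real.sign_nonneg_iff.1 ((Real.sign_nonneg_iff.2 h0).trans (h hx hy hxy))
  · exact Or.inr fun x hx y hy hxy h0 =>
      Real.sign_nonneg_iff.1 ((Real.sign_nonneg_iff.2 h0).trans (h hx hy hxy))

theorem SingleCrossingOn.nonneg_between (hg : SingleCrossingOn g s) (hx : x ∈ s) (hy : y ∈ s)
    (hz : z ∈ s) (hxy : x ≤ y) (hyz : y ≤ z) (hgx : 0 ≤ g x) (hgz : 0 ≤ g z) : 0 ≤ g y := by
  rcases hg.nonneg_up_or_down with h | h
  · exact h x hx y hy hxy hgx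
  · exact h y hy z hz hyz hgz

theorem SingleCrossingOn.neg_between (hg : SingleCrossingOn g s) (hx : x ∈ s) (hy : y ∈ s)
    (hz : z ∈ s) (hxy : x ≤ y) (hyz : y ≤ z) (hgx : g x < 0) (hgz : g z < 0) : g y < 0 := by
  by_contra! hgy
  rcases hg.nonneg_up_or_down with h | h
  · exact hgz.not_ge (h y hy z hz hyz hgy)
  · exact hgx.not_ge (h x hx y hy hxy hgy)

theorem SingleCrossingOn.neg_of_le_of_neg (hg : SingleCrossingOn g (Icc t0 t1))
    (hx : x ∈ Icc t0 t1) (hy : y ∈ Icc t0 t1) (hyx : y ≤ x) (hgx : g x < 0) (hg1 : 0 ≤ g t1) :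
    g y < 0 := by
  by_contra! hgy
  exact hgx.not_ge <| hg.nonneg_between hy hx (right_mem_Icc.2 (hx.1.trans hx.2)) hyx hx.2 hgy hg1

theorem SingleCrossingOn.lt_of_neg_of_nonneg (hg : SingleCrossingOn g (Icc t0 t1))
    (hx : x ∈ Icc t0 t1) (hy : y ∈ Icc t0 t1) (hgx : g x < 0) (hgy : 0 ≤ g y) (hg1 : 0 ≤ g t1) :
    x < y := by
  by_contra! hyx
  exact (hg.neg_of_le_of_neg hx hy hyx hgx hg1).not_ge hgy

end SingleCrossing

theorem _root_.ContinuousOn.sign_of_unique_zero {f : ℝ → ℝ} {a b z s : ℝ}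
    (hf : ContinuousOn f (Icc a b)) (ha : f a < 0) (hb : 0 < f b)
    (huniq : ∀ t ∈ Icc a b, f t = 0 → t = z) (hs : s ∈ Icc a b) :
    (s < z → f s < 0) ∧ (z < s → 0 < f s) := by
  constructor
  · intro hsz
    by_contra! h
    obtain ⟨c, hc, hfc⟩ :=
      intermediate_value_Icc hs.1 (hf.mono (Icc_subset_Icc le_rfl hs.2)) ⟨ha.le, h⟩
    exact hsz.not_ge (huniq c ⟨hc.1, hc.2.trans hs.2⟩ hfc ▸ hc.2)
  · intro hzs
    by_contra! h
    obtain ⟨c, hc, hfc⟩ :=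
      intermediate_value_Icc hs.2 (hf.mono (Icc_subset_Icc hs.1 le_rfl)) ⟨h, hb.le⟩
    exact hzs.not_ge (huniq c ⟨hs.1.trans hc.1, hc.2⟩ hfc ▸ hc.1)

theorem eq_of_convex_comb_ge {w x y₁ y₂ : ℝ} (hw : w ∈ Icc (0 : ℝ) 1)
    (h : x ≤ w * y₁ + (1 - w) * y₂) (h₁ : 0 < w → y₁ ≤ x) (h₂ : w < 1 → y₂ ≤ x) :
    (0 < w → y₁ = x) ∧ (w < 1 → y₂ = x) := by
  rcases hw.1.eq_or_lt with rfl | hw₀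
  · exact ⟨fun h => absurd h (lt_irrefl 0), fun h' => le_antisymm (h₂ h') (by simpa using h)⟩
  rcases hw.2.lt_or_eq with hw₁ | rfl
  · have := h₁ hw₀; have := h₂ hw₁
    exact ⟨fun _ => by nlinarith, fun _ => by nlinarith⟩
  · exact ⟨fun h' => le_antisymm (h₁ h') (by simpa using h), fun h => absurd h (lt_irrefl 1)⟩

theorem convex_comb_eq_of_imp {w y₁ y₂ z : ℝ} (hw : w ∈ Icc (0 : ℝ) 1) (h₁ : 0 < w → y₁ = z)
    (h₂ : w < 1 → y₂ = z) : w * y₁ + (1 - w) * y₂ = z := by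
  rcases hw.1.eq_or_lt with rfl | hw₀
  · simp [h₂ zero_lt_one]
  rcases hw.2.lt_or_eq with hw₁ | rfl
  · rw [h₁ hw₀, h₂ hw₁]; ring
  · simp [h₁ hw₀]

def mix (w : ℝ) (a b : Bundle n) : Bundle n → ℝ := fun x => w * pt a x + (1 - w) * pt b x

theorem isStoch_mix {w : ℝ} (hw : w ∈ Icc (0 : ℝ) 1) (a b : Bundle n) : IsStoch (mix w a b) := by
  refine ⟨fun x => ?_, ?_⟩
  · have := hw.1; have : 0 ≤ 1 - w := sub_nonneg.2 hw.2
    unfold mix pt; split_ifs <;> positivity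
  · simp [mix, pt, Finset.sum_add_distrib]

theorem phiA_mix (φ : Bundle n → ℝ → ℝ) (w : ℝ) (a b : Bundle n) (t : ℝ) :
    phiA φ (mix w a b) t = w * φ a t + (1 - w) * φ b t := by
  simp [phiA, mix, pt, add_mul, Finset.sum_add_distrib]

section SCD

variable {φ : Bundle n → ℝ → ℝ} {t0 t1 : ℝ}

theorem SCDstar.singleCrossingOn_mix (hscd : SCDstar φ t0 t1) {w v : ℝ}
    (hw : w ∈ Icc (0 : ℝ) 1) (hv : v ∈ Icc (0 : ℝ) 1) (a a' b b' : Bundle n) :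
    SingleCrossingOn (fun t => (w * φ a t + (1 - w) * φ a' t) - (v * φ b t + (1 - v) * φ b' t))
      (Icc t0 t1) := by
  simpa only [phiA_mix] using hscd _ _ (isStoch_mix hw a a') (isStoch_mix hv b b')

theorem SCDstar.singleCrossingOn_sub (hscd : SCDstar φ t0 t1) (b b' : Bundle n) :
    SingleCrossingOn (fun t => φ b t - φ b' t) (Icc t0 t1) := by
  simpa using hscd.singleCrossingOn_mix (right_mem_Icc.2 zero_le_one)
    (right_mem_Icc.2 zero_le_one) b b b' b'

end SCD

theorem exists_mix_ge_at_endpoints {f₁ f₂ g : ℝ → ℝ} {t0 t1 x : ℝ}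
    (hsc : ∀ w ∈ Icc (0 : ℝ) 1,
      SingleCrossingOn (fun t => w * f₁ t + (1 - w) * f₂ t - g t) (Icc t0 t1))
    (hx : x ∈ Icc t0 t1) (h₁ : g t0 ≤ f₁ t0) (h₁x : g x ≤ f₁ x) (h₂x : g x ≤ f₂ x)
    (h₂ : g t1 ≤ f₂ t1) :
    ∃ w ∈ Icc (0 : ℝ) 1, g t0 ≤ w * f₁ t0 + (1 - w) * f₂ t0 ∧
      g t1 ≤ w * f₁ t1 + (1 - w) * f₂ t1 := by
  have ht : t0 ≤ t1 := hx.1.trans hx.2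
  have hcover : Icc (0 : ℝ) 1 ⊆ {w | g t0 ≤ w * f₁ t0 + (1 - w) * f₂ t0} ∪
      {w | g t1 ≤ w * f₁ t1 + (1 - w) * f₂ t1} := by
    intro w hw
    by_contra! h
    simp only [mem_union, mem_ofPred_eq, not_or, not_le] at h
    have hw₀ := hw.1; have hw₁ : 0 ≤ 1 - w := sub_nonneg.2 hw.2
    have hmid : 0 ≤ w * f₁ x + (1 - w) * f₂ x - g x := by nlinarith
    exact hmid.not_gt <| (hsc w hw).neg_between (left_mem_Icc.2 ht) hx (right_mem_Icc.2 ht)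
      hx.1 hx.2 (by linarith [h.1]) (by linarith [h.2])
  obtain ⟨w, hw, h0, h1⟩ := isPreconnected_closed_iff.1 isPreconnected_Icc _ _
    (isClosed_le continuous_const (by fun_prop)) (isClosed_le continuous_const (by fun_prop))
    hcover ⟨1, right_mem_Icc.2 zero_le_one, by simpa using h₁⟩
    ⟨0, left_mem_Icc.2 zero_le_one, by simpa using h₂⟩
  exact ⟨w, hw, h0, h1⟩

section Menus

variable {φ : Bundle n → ℝ → ℝ} {t0 t1 : ℝ} {S : Finset (Bundle n)} {b : Bundle n}

theorem NeverStrictBR.exists_le_before_le_after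
    (hcont : ∀ b : Bundle n, ContinuousOn (φ b) (Icc t0 t1)) (hscd : SCDstar φ t0 t1)
    (ht : t0 ≤ t1) (hb : NeverStrictBR φ t0 t1 b) :
    ∃ c₁ c₂ : Bundle n, c₁ ≠ b ∧ c₂ ≠ b ∧ ∃ x ∈ Icc t0 t1,
      (∀ s ∈ Icc t0 t1, s ≤ x → φ b s ≤ φ c₁ s) ∧ (∀ s ∈ Icc t0 t1, x ≤ s → φ b s ≤ φ c₂ s) := by
  set I := Icc t0 t1
  let D : Bundle n → Set ℝ := fun c => {s ∈ I | φ b s ≤ φ c s}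
  let down := {c | c ≠ b ∧ ∀ x ∈ D c, ∀ s ∈ I, s ≤ x → s ∈ D c}
  let up := {c | c ≠ b ∧ ∀ x ∈ D c, ∀ s ∈ I, x ≤ s → s ∈ D c}
  have hD : ∀ c, (∀ x ∈ D c, ∀ s ∈ I, s ≤ x → s ∈ D c) ∨ (∀ x ∈ D c, ∀ s ∈ I, x ≤ s → s ∈ D c) := by
    intro c
    rcases (hscd.singleCrossingOn_sub c b).nonneg_up_or_down with h | h
    · exact Or.inr fun x hx s hs hxs => ⟨hs, sub_nonneg.1 (h x hx.1 s hs hxs (sub_nonneg.2 hx.2))⟩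
    · exact Or.inl fun x hx s hs hsx => ⟨hs, sub_nonneg.1 (h s hs x hx.1 hsx (sub_nonneg.2 hx.2))⟩
  have hclosed : ∀ c, IsClosed (D c) := fun c => isClosed_Icc.isClosed_le (hcont b) (hcont c)
  have hcover : I ⊆ (⋃ c ∈ down, D c) ∪ ⋃ c ∈ up, D c := by
    intro t ht
    obtain ⟨c, hcb, hc⟩ := hb t ht
    simp only [mem_union, mem_iUnion₂]
    rcases hD c with h | h
    · exact Or.inl ⟨c, ⟨hcb, h⟩, ht, hc⟩
    · exact Or.inr ⟨c, ⟨hcb, h⟩, ht, hc⟩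
  have ht0 : t0 ∈ I := left_mem_Icc.2 ht
  have ht1 : t1 ∈ I := right_mem_Icc.2 ht
  have hdown : (I ∩ ⋃ c ∈ down, D c).Nonempty := by
    obtain ⟨c, hcb, hc⟩ := hb t0 ht0
    refine ⟨t0, ht0, mem_iUnion₂.2 ⟨c, ⟨hcb, ?_⟩, ht0, hc⟩⟩
    rcases hD c with h | h
    · exact h
    · exact fun _ _ s hs _ => h t0 ⟨ht0, hc⟩ s hs hs.1
  have hup : (I ∩ ⋃ c ∈ up, D c).Nonempty := by
    obtain ⟨c, hcb, hc⟩ := hb t1 ht1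
    refine ⟨t1, ht1, mem_iUnion₂.2 ⟨c, ⟨hcb, ?_⟩, ht1, hc⟩⟩
    rcases hD c with h | h
    · exact fun _ _ s hs _ => h t1 ⟨ht1, hc⟩ s hs hs.2
    · exact h
  obtain ⟨x, hx, hxd, hxu⟩ := isPreconnected_closed_iff.1 isPreconnected_Icc _ _
    ((toFinite down).isClosed_biUnion fun c _ => hclosed c)
    ((toFinite up).isClosed_biUnion fun c _ => hclosed c) hcover hdown hup
  obtain ⟨c₁, ⟨hc₁, hc₁d⟩, hxc₁⟩ := mem_iUnion₂.1 hxd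
  obtain ⟨c₂, ⟨hc₂, hc₂u⟩, hxc₂⟩ := mem_iUnion₂.1 hxu
  exact ⟨c₁, c₂, hc₁, hc₂, x, hx, fun s hs hsx => (hc₁d x hxc₁ s hs hsx).2,
    fun s hs hxs => (hc₂u x hxc₂ s hs hxs).2⟩

theorem NeverStrictBR.exists_mix_ge (hcont : ∀ b : Bundle n, ContinuousOn (φ b) (Icc t0 t1))
    (hscd : SCDstar φ t0 t1) (ht : t0 ≤ t1) (hb : NeverStrictBR φ t0 t1 b) :
    ∃ c₁ c₂ : Bundle n, c₁ ≠ b ∧ c₂ ≠ b ∧ ∃ w ∈ Icc (0 : ℝ) 1,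
      ∀ t ∈ Icc t0 t1, φ b t ≤ w * φ c₁ t + (1 - w) * φ c₂ t := by
  obtain ⟨c₁, c₂, hc₁, hc₂, x, hx, h₁, h₂⟩ := hb.exists_le_before_le_after hcont hscd ht
  have hsc : ∀ w ∈ Icc (0 : ℝ) 1, SingleCrossingOn
      (fun t => w * φ c₁ t + (1 - w) * φ c₂ t - φ b t) (Icc t0 t1) := fun w hw => by
    simpa using hscd.singleCrossingOn_mix hw (right_mem_Icc.2 zero_le_one) c₁ c₂ b b
  have ht0 := left_mem_Icc.2 ht
  have ht1 := right_mem_Icc.2 ht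
  obtain ⟨w, hw, hw0, hw1⟩ := exists_mix_ge_at_endpoints hsc hx (h₁ t0 ht0 hx.1) (h₁ x hx le_rfl)
    (h₂ x hx le_rfl) (h₂ t1 ht1 hx.2)
  exact ⟨c₁, c₂, hc₁, hc₂, w, hw, fun t htI => sub_nonneg.1 <| (hsc w hw).nonneg_between ht0 htI
    ht1 htI.1 htI.2 (sub_nonneg.2 hw0) (sub_nonneg.2 hw1)⟩

theorem MinimalOptimalMenu.exists_forall_le (hS : MinimalOptimalMenu φ t0 t1 S) (hb : b ∈ S) :
    ∃ t ∈ Icc t0 t1, ∀ c, φ c t ≤ φ b t := by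
  by_contra! h
  refine hS.2 (S.erase b) (Finset.erase_ssubset hb) fun t ht => ?_
  obtain ⟨c, hc, hmax⟩ := hS.1 t ht
  obtain ⟨c', hc'⟩ := h t ht
  exact ⟨c, Finset.mem_erase.2 ⟨fun hcb => (hc'.trans_le (hmax c')).ne (by rw [hcb]), hc⟩, hmax⟩

theorem OptimalMenu.mem_of_forall_lt (hS : OptimalMenu φ t0 t1 S) {t : ℝ} (ht : t ∈ Icc t0 t1)
    (h : ∀ c, c ≠ b → φ c t < φ b t) : b ∈ S := by
  obtain ⟨c, hc, hmax⟩ := hS t ht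
  by_cases hcb : c = b
  · exact hcb ▸ hc
  · exact absurd (hmax b) (h c hcb).not_ge

/-- A mixture of other bundles dominating `a` mixes best responses at `τ`, so by `hsep` it puts all
its weight on `e`; but `e` does not dominate `a`. -/
theorem OptimalMenu.mem_of_separating (hS : OptimalMenu φ t0 t1 S)
    (hcont : ∀ b : Bundle n, ContinuousOn (φ b) (Icc t0 t1)) (hscd : SCDstar φ t0 t1)
    {a e : Bundle n} {τ p q : ℝ} (hτ : τ ∈ Icc t0 t1) (hmax : ∀ c, φ c τ ≤ φ a τ)
    (hp : 0 ≤ p) (hq : 0 ≤ q)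
    (hsep : ∀ c, c ≠ a → c ≠ e → φ c τ = φ a τ →
      p * φ c t0 + q * φ c t1 < p * φ a t0 + q * φ a t1)
    (he : p * φ e t0 + q * φ e t1 ≤ p * φ a t0 + q * φ a t1)
    (hea : φ e t0 < φ a t0 ∨ φ e t1 < φ a t1) : a ∈ S := by
  have ht : t0 ≤ t1 := hτ.1.trans hτ.2
  by_contra ha
  have hnsb : NeverStrictBR φ t0 t1 a := fun t ht => by
    obtain ⟨c, hc, hcmax⟩ := hS t ht
    exact ⟨c, fun h => ha (h ▸ hc), hcmax a⟩
  obtain ⟨c₁, c₂, hc₁, hc₂, w, hw, hdom⟩ := hnsb.exists_mix_ge hcont hscd ht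
  obtain ⟨hτ₁, hτ₂⟩ := eq_of_convex_comb_ge hw (hdom τ hτ) (fun _ => hmax c₁) (fun _ => hmax c₂)
  let F : Bundle n → ℝ := fun c => p * φ c t0 + q * φ c t1
  have hFle : ∀ c, c ≠ a → φ c τ = φ a τ → F c ≤ F a := fun c hca hc =>
    (eq_or_ne c e).elim (fun h => h ▸ he) fun hce => (hsep c hca hce hc).le
  have hF : F a ≤ w * F c₁ + (1 - w) * F c₂ := by
    have h0 := mul_le_mul_of_nonneg_left (hdom t0 (left_mem_Icc.2 ht)) hp
    have h1 := mul_le_mul_of_nonneg_left (hdom t1 (right_mem_Icc.2 ht)) hq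
    simp only [F]; linarith
  obtain ⟨hF₁, hF₂⟩ := eq_of_convex_comb_ge hw hF (fun h => hFle c₁ hc₁ (hτ₁ h))
    (fun h => hFle c₂ hc₂ (hτ₂ h))
  have he₁ : 0 < w → c₁ = e := fun h => by_contra fun hne => (hsep c₁ hc₁ hne (hτ₁ h)).ne (hF₁ h)
  have he₂ : w < 1 → c₂ = e := fun h => by_contra fun hne => (hsep c₂ hc₂ hne (hτ₂ h)).ne (hF₂ h)
  have hmix : ∀ t, w * φ c₁ t + (1 - w) * φ c₂ t = φ e t := fun t =>
    convex_comb_eq_of_imp hw (fun h => by rw [he₁ h]) (fun h => by rw [he₂ h])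
  rcases hea with h | h
  · linarith [hdom t0 (left_mem_Icc.2 ht), hmix t0]
  · linarith [hdom t1 (right_mem_Icc.2 ht), hmix t1]

end Menus

/-- The paper's `λ` (at `t1`) and `μ` (at `t0`) of `c` on the chord from `e` to `f`. -/
def HasWeights (φ : Bundle n → ℝ → ℝ) (t0 t1 : ℝ) (e f c : Bundle n) (l m : ℝ) : Prop :=
  φ c t1 = l * φ f t1 + (1 - l) * φ e t1 ∧ φ c t0 = m * φ f t0 + (1 - m) * φ e t0

section Weights

variable {φ : Bundle n → ℝ → ℝ} {t0 t1 : ℝ} {S : Finset (Bundle n)} {a c e f : Bundle n}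
  {l m lam mu : ℝ}

theorem HasWeights.symm (h : HasWeights φ t0 t1 e f c l m) :
    HasWeights φ t0 t1 f e c (1 - l) (1 - m) :=
  ⟨by rw [h.1]; ring, by rw [h.2]; ring⟩

theorem hasWeights_left : HasWeights φ t0 t1 e f e 0 0 := ⟨by ring, by ring⟩

theorem hasWeights_right : HasWeights φ t0 t1 e f f 1 1 := ⟨by ring, by ring⟩

/-- The mixture of `c` and `e` with weight `lam / l` on `c` is dominated by `a` at both ends,
hence everywhere by single crossing, in particular at `τ`. -/
theorem le_of_hasWeights (hscd : SCDstar φ t0 t1) {τ : ℝ} (hτ : τ ∈ Icc t0 t1)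
    (hae : φ a τ = φ e τ) (ha : HasWeights φ t0 t1 e f a lam mu)
    (hc : HasWeights φ t0 t1 e f c l m) (hlam : 0 < lam) (hl : lam ≤ l)
    (hlm : 0 ≤ (mu * l - lam * m) * (φ f t0 - φ e t0)) : φ c τ ≤ φ e τ := by
  have ht : t0 ≤ t1 := hτ.1.trans hτ.2
  have hl₀ : 0 < l := hlam.trans_le hl
  set β := lam / l
  have hβ₀ : 0 < β := div_pos hlam hl₀
  have hβ : β ∈ Icc (0 : ℝ) 1 := ⟨hβ₀.le, div_le_one_of_le₀ hl hl₀.le⟩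
  have hsc : SingleCrossingOn (fun t => φ a t - (β * φ c t + (1 - β) * φ e t)) (Icc t0 t1) := by
    simpa using hscd.singleCrossingOn_mix (right_mem_Icc.2 zero_le_one) hβ a a c e
  have hβl : β * l = lam := div_mul_cancel₀ lam hl₀.ne'
  have h := hsc.nonneg_between (left_mem_Icc.2 ht) hτ (right_mem_Icc.2 ht) hτ.1 hτ.2 ?_ ?_
  · simp only [hae] at h
    nlinarith
  · have : φ a t0 - (β * φ c t0 + (1 - β) * φ e t0)
        = (mu * l - lam * m) * (φ f t0 - φ e t0) / l := by
      rw [ha.2, hc.2, ← hβl]; field_simp; ring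
    simp only [this]; positivity
  · have : φ a t1 - (β * φ c t1 + (1 - β) * φ e t1) = 0 := by
      rw [ha.1, hc.1, ← hβl]; ring
    simp only [this, le_refl]

theorem OptimalMenu.mem_of_crossing (hS : OptimalMenu φ t0 t1 S)
    (hcont : ∀ b : Bundle n, ContinuousOn (φ b) (Icc t0 t1)) (hscd : SCDstar φ t0 t1)
    {τ : ℝ} (hτ : τ ∈ Icc t0 t1) (hae : φ a τ = φ e τ) (ha : HasWeights φ t0 t1 e f a lam mu)
    (hlam : 0 < lam) (hmu : 0 < mu) (hD : (φ f t0 - φ e t0) * (φ f t1 - φ e t1) < 0)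
    (hclass : ∀ c, c ≠ e → c ≠ a → φ c τ < φ e τ ∨
      ∃ l m, HasWeights φ t0 t1 e f c l m ∧ lam ≤ l ∧ 0 < (mu * l - lam * m) * (φ f t0 - φ e t0)) :
    a ∈ S := by
  set D₀ := φ f t0 - φ e t0
  set D₁ := φ f t1 - φ e t1
  have hD₁ : 0 < |D₁| := abs_pos.2 fun h => by simp [h] at hD
  -- the functional with normal `(lam |D₁|, mu |D₀|)` is constant on the line through `e` and `a`
  have hF : ∀ c l m, HasWeights φ t0 t1 e f c l m →
      lam * |D₁| * φ c t0 + mu * |D₀| * φ c t1 - (lam * |D₁| * φ a t0 + mu * |D₀| * φ a t1)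
        = -|D₁| * ((mu * l - lam * m) * D₀) := by
    intro c l m hc
    rw [hc.1, hc.2, ha.1, ha.2]
    rcases lt_or_gt_of_ne (show D₁ ≠ 0 by rintro h; simp [h] at hD) with h₁ | h₁
    · rw [abs_of_neg h₁, abs_of_pos (by nlinarith : 0 < D₀)]; ring
    · rw [abs_of_pos h₁, abs_of_neg (by nlinarith : D₀ < 0)]; ring
  have hmax : ∀ c, φ c τ ≤ φ a τ := by
    intro c
    rw [hae]
    by_cases hce : c = e
    · rw [hce]
    by_cases hca : c = a
    · rw [hca, hae]
    rcases hclass c hce hca with h | ⟨l, m, hc, hl, hlm⟩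
    · exact h.le
    · exact le_of_hasWeights hscd hτ hae ha hc hlam hl hlm.le
  refine hS.mem_of_separating hcont hscd hτ hmax (e := e) (p := lam * |D₁|) (q := mu * |D₀|)
    (by positivity) (by positivity) ?_ ?_ ?_
  · intro c hca hce hc
    rcases hclass c hce hca with h | ⟨l, m, hcw, -, hlm⟩
    · exact absurd hc (by rw [hae]; exact h.ne)
    · nlinarith [hF c l m hcw]
  · have := hF e 0 0 hasWeights_left
    linarith
  · rcases lt_or_gt_of_ne (show D₀ ≠ 0 by rintro h; simp [h] at hD) with h₀ | h₀
    · exact Or.inr (by rw [ha.1]; nlinarith)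
    · exact Or.inl (by rw [ha.2]; nlinarith)

end Weights

section Root

variable {φ : Bundle n → ℝ → ℝ} {t0 t1 : ℝ} {S : Finset (Bundle n)} {br : Bundle n} {r : ℝ}

theorem lt_of_not_subset (hscd : SCDstar φ t0 t1)
    (hempty : ∀ t ∈ Icc t0 t1, φ (∅ : Bundle n) t = 0) (hr : r ∈ Icc t0 t1)
    (hbr : ∀ t ∈ Icc t0 t1, r < t → 0 < φ br t)
    (hfirst : ∀ c : Bundle n, c ≠ ∅ → c ≠ br → φ c r < φ br r)
    (hroot2 : ∀ c : Bundle n, ¬ br ⊆ c → φ c t1 < φ br t1) :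
    ∀ c : Bundle n, ¬ br ⊆ c → ∀ t ∈ Icc t0 t1, r < t → φ c t < φ br t := by
  intro c hc t ht hrt
  rcases eq_or_ne c ∅ with rfl | hc₀
  · rw [hempty t ht]; exact hbr t ht hrt
  have hcbr : c ≠ br := fun h => hc (h ▸ subset_refl c)
  exact sub_neg.1 <| (hscd.singleCrossingOn_sub c br).neg_between hr ht
    (right_mem_Icc.2 (hr.1.trans hr.2)) hrt.le ht.2 (sub_neg.2 (hfirst c hc₀ hcbr))
    (sub_neg.2 (hroot2 c hc))

theorem OptimalMenu.mem_of_first_zero (hS : OptimalMenu φ t0 t1 S)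
    (hempty : ∀ t ∈ Icc t0 t1, φ (∅ : Bundle n) t = 0) {tz : Bundle n → ℝ}
    (hr : r ∈ Ico t0 t1) (hbr : ∀ t ∈ Icc t0 t1, r < t → 0 < φ br t)
    (hlt : ∀ c : Bundle n, c ≠ ∅ → c ≠ br → r < tz c)
    (hneg : ∀ c : Bundle n, c ≠ ∅ → ∀ t ∈ Icc t0 t1, t < tz c → φ c t < 0) : br ∈ S := by
  obtain ⟨t, hrt, ht₁, htz⟩ : ∃ t, r < t ∧ t < t1 ∧ ∀ c : Bundle n, c ≠ ∅ → c ≠ br → t < tz c := by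
    have : ∀ᶠ t in 𝓝[>] r, t < t1 ∧ ∀ c : Bundle n, c ≠ ∅ → c ≠ br → t < tz c :=
      nhdsWithin_le_nhds <| (eventually_lt_nhds hr.2).and <| eventually_all.2 fun c =>
        eventually_imp_distrib_left.2 fun hc => eventually_imp_distrib_left.2 fun hcbr =>
          eventually_lt_nhds (hlt c hc hcbr)
    obtain ⟨t, ⟨ht₁, htz⟩, hrt⟩ := (this.and self_mem_nhdsWithin).exists
    exact ⟨t, hrt, ht₁, htz⟩
  have ht : t ∈ Icc t0 t1 := ⟨hr.1.trans hrt.le, ht₁.le⟩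
  refine hS.mem_of_forall_lt ht fun c hc => ?_
  rcases eq_or_ne c ∅ with rfl | hc₀
  · rw [hempty t ht]; exact hbr t ht hrt
  · exact (hneg c hc₀ t ht (htz c hc₀ hc)).trans (hbr t ht hrt)

theorem MinimalOptimalMenu.subset_of_mem (hS : MinimalOptimalMenu φ t0 t1 S)
    (hempty : ∀ t ∈ Icc t0 t1, φ (∅ : Bundle n) t = 0) {tz : Bundle n → ℝ}
    (hlt : ∀ c : Bundle n, c ≠ ∅ → c ≠ br → r < tz c)
    (hneg : ∀ c : Bundle n, c ≠ ∅ → ∀ t ∈ Icc t0 t1, t < tz c → φ c t < 0)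
    (hbelow : ∀ c : Bundle n, ¬ br ⊆ c → ∀ t ∈ Icc t0 t1, r < t → φ c t < φ br t) :
    ∀ b ∈ S, b ≠ ∅ → br ⊆ b := by
  intro b hb hb₀
  by_contra hbr
  obtain ⟨t, ht, hmax⟩ := hS.exists_forall_le hb
  rcases le_or_gt t r with htr | hrt
  · exact (hneg b hb₀ t ht (htr.trans_lt (hlt b hb₀ fun h => hbr (h ▸ subset_refl b)))).not_ge
      (hempty t ht ▸ hmax ∅)
  · exact (hbelow b hbr t ht hrt).not_ge (hmax br)

end Root

section Branches

variable {φ : Bundle n → ℝ → ℝ} {t0 t1 : ℝ} {S : Finset (Bundle n)} {a e f : Bundle n}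
  {r lam mu : ℝ}

theorem OptimalMenu.mem_of_lower_crossing (hS : OptimalMenu φ t0 t1 S)
    (hcont : ∀ b : Bundle n, ContinuousOn (φ b) (Icc t0 t1)) (hscd : SCDstar φ t0 t1)
    (hr : r ∈ Icc t0 t1)
    (hbelow : ∀ c : Bundle n, ¬ e ⊆ c → ∀ t ∈ Icc t0 t1, r < t → φ c t < φ e t)
    (har : φ a r < φ e r) (hD₁ : φ e t1 < φ f t1) (hD₀ : φ f t0 < φ e t0)
    (ha : HasWeights φ t0 t1 e f a lam mu) (hlam : 0 < lam) (hmu : 0 < mu)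
    (habove : ∀ c : Bundle n, e ⊆ c → c ≠ e → c ≠ a →
      ∃ l m, HasWeights φ t0 t1 e f c l m ∧ lam ≤ l ∧ mu * l < lam * m) : a ∈ S := by
  have ht : t0 ≤ t1 := hr.1.trans hr.2
  obtain ⟨τ, hτ, hτa⟩ : ∃ τ ∈ Icc t0 t1, φ a τ - φ e τ = 0 :=
    intermediate_value_Icc ht ((hcont a).sub (hcont e))
      ⟨show φ a t0 - φ e t0 ≤ 0 by rw [ha.2]; nlinarith,
        show 0 ≤ φ a t1 - φ e t1 by rw [ha.1]; nlinarith⟩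
  have hrτ : r < τ := (hscd.singleCrossingOn_sub a e).lt_of_neg_of_nonneg hr hτ (sub_neg.2 har)
    hτa.ge (by rw [ha.1]; nlinarith)
  refine hS.mem_of_crossing hcont hscd hτ (sub_eq_zero.1 hτa) ha hlam hmu (by nlinarith)
    fun c hce hca => ?_
  by_cases hec : e ⊆ c
  · obtain ⟨l, m, hc, hl, hlm⟩ := habove c hec hce hca
    exact Or.inr ⟨l, m, hc, hl, mul_pos_of_neg_of_neg (by linarith) (by linarith)⟩
  · exact Or.inl (hbelow c hec τ hτ hrτ)

theorem OptimalMenu.mem_of_upper_crossing (hS : OptimalMenu φ t0 t1 S)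
    (hcont : ∀ b : Bundle n, ContinuousOn (φ b) (Icc t0 t1)) (hscd : SCDstar φ t0 t1)
    (hr : r ∈ Icc t0 t1)
    (hbelow : ∀ c : Bundle n, ¬ e ⊆ c → ∀ t ∈ Icc t0 t1, r < t → φ c t < φ e t)
    (hfr : φ f r < φ e r) (hD₁ : φ e t1 < φ f t1) (hD₀ : φ f t0 < φ e t0)
    (ha : HasWeights φ t0 t1 e f a lam mu) (hlam : lam ∈ Ioo (0 : ℝ) 1) (hmu : mu < 1)
    (hmulam : mu < lam)
    (habove : ∀ c : Bundle n, e ⊆ c → c ≠ e → c ≠ f → c ≠ a →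
      ∃ l m, HasWeights φ t0 t1 e f c l m ∧ l ≤ lam ∧ (1 - mu) * l + (mu - lam) < (1 - lam) * m) :
    a ∈ S := by
  have ht : t0 ≤ t1 := hr.1.trans hr.2
  obtain ⟨σ, hσ, hσa⟩ : ∃ σ ∈ Icc t0 t1, φ f σ - φ a σ = 0 :=
    intermediate_value_Icc ht ((hcont f).sub (hcont a))
      ⟨show φ f t0 - φ a t0 ≤ 0 by rw [ha.2]; nlinarith,
        show 0 ≤ φ f t1 - φ a t1 by rw [ha.1]; nlinarith [hlam.2]⟩
  have haf : φ a σ = φ f σ := (sub_eq_zero.1 hσa).symm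
  have hef : φ e σ ≤ φ f σ := le_of_hasWeights hscd hσ haf ha.symm hasWeights_right
    (by linarith [hlam.2]) (by linarith [hlam.1]) (by nlinarith)
  have hrσ : r < σ := (hscd.singleCrossingOn_sub f e).lt_of_neg_of_nonneg hr hσ (sub_neg.2 hfr)
    (sub_nonneg.2 hef) (sub_nonneg.2 hD₁.le)
  refine hS.mem_of_crossing hcont hscd hσ haf ha.symm (by linarith [hlam.2]) (by linarith)
    (by nlinarith) fun c hcf hca => ?_
  by_cases hec : e ⊆ c
  · by_cases hce : c = e
    · subst hce
      exact Or.inr ⟨1, 1, hasWeights_right, by linarith [hlam.1], by nlinarith⟩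
    obtain ⟨l, m, hc, hl, hlm⟩ := habove c hec hce hcf hca
    exact Or.inr ⟨1 - l, 1 - m, hc.symm, by linarith, mul_pos (by nlinarith) (by linarith)⟩
  · exact Or.inl ((hbelow c hec σ hσ hrσ).trans_le hef)

end Branches

/-- The slopes of `(0,0) → (lam1,mu1) → (lam2,mu2) → (1,1)` increase, so each point lies strictly
below the chords that skip it. -/
theorem below_chords_of_slope_lt {lam1 lam2 mu1 mu2 : ℝ} (hlam1 : 0 < lam1) (hlam : lam1 < lam2)
    (hlam2 : lam2 < 1) (h₁ : mu1 / lam1 < (mu2 - mu1) / (lam2 - lam1))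
    (h₂ : (mu2 - mu1) / (lam2 - lam1) < (1 - mu2) / (1 - lam2)) :
    mu1 < lam1 ∧ mu2 < lam2 ∧ mu1 * lam2 < lam1 * mu2 ∧
      (1 - mu2) * lam1 + (mu2 - lam2) < (1 - lam2) * mu1 := by
  rw [div_lt_div_iff₀ hlam1 (by linarith)] at h₁
  rw [div_lt_div_iff₀ (by linarith) (by linarith)] at h₂
  refine ⟨?_, ?_, by nlinarith, by nlinarith⟩ <;> nlinarith [mul_pos hlam1 (sub_pos.2 hlam)]

theorem _root_.Finset.univ_sdiff_singleton_eq_of_subset_insert {α : Type*} [Fintype α]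
    [DecidableEq α] {s : Finset α} {i : α} (hi : i ∉ s) (h : Finset.univ \ {i} ⊆ insert i s) :
    Finset.univ \ {i} = s := by
  refine ((Finset.subset_insert_iff_of_notMem (by simp)).1 h).antisymm fun j hj => ?_
  simpa using fun hji : j = i => hi (hji ▸ hj)

section Tree

variable {φ : Bundle n → ℝ → ℝ} {t0 t1 : ℝ} {br : Bundle n} {i : Fin n} {lam1 lam2 mu1 mu2 : ℝ}

theorem exists_weights_above_chord_insert
    (hwh : HasWeights φ t0 t1 br Finset.univ (Finset.univ \ {i}) lam2 mu2)
    (hother : ∀ c : Bundle n, br ⊂ c → c ⊂ Finset.univ →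
      c ≠ insert i br → c ≠ Finset.univ \ {i} →
      ∃ lamc muc : ℝ,
        φ c t1 = lamc * φ Finset.univ t1 + (1 - lamc) * φ br t1 ∧
        φ c t0 = muc * φ Finset.univ t0 + (1 - muc) * φ br t0 ∧
        mu1 / lam1 * lamc < muc ∧
        (1 - mu2) / (1 - lam2) * lamc + (mu2 - lam2) / (1 - lam2) < muc ∧
        lam1 ≤ lamc ∧ muc ≤ mu2)
    (hlam1 : lam1 ∈ Ioo (0 : ℝ) 1) (hlam : lam1 < lam2) (hmu1 : mu1 < lam1)
    (hmu12 : mu1 * lam2 < lam1 * mu2) (c : Bundle n) (hbc : br ⊆ c) (hcbr : c ≠ br)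
    (hcbh : c ≠ insert i br) :
    ∃ l m, HasWeights φ t0 t1 br Finset.univ c l m ∧ lam1 ≤ l ∧ mu1 * l < lam1 * m := by
  by_cases hcU : c = Finset.univ
  · subst hcU
    exact ⟨1, 1, hasWeights_right, hlam1.2.le, by linarith⟩
  by_cases hcwh : c = Finset.univ \ {i}
  · subst hcwh
    exact ⟨lam2, mu2, hwh, hlam.le, hmu12⟩
  obtain ⟨l, m, h₁, h₀, hlm, -, hl, -⟩ := hother c (ssubset_of_subset_of_ne hbc (Ne.symm hcbr))
    (Finset.ssubset_univ_iff.2 hcU) hcbh hcwh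
  rw [div_mul_eq_mul_div, div_lt_iff₀ hlam1.1] at hlm
  exact ⟨l, m, ⟨h₁, h₀⟩, hl, by linarith⟩

theorem exists_weights_above_chord_sdiff
    (hbh : HasWeights φ t0 t1 br Finset.univ (insert i br) lam1 mu1)
    (hother : ∀ c : Bundle n, br ⊂ c → c ⊂ Finset.univ →
      c ≠ insert i br → c ≠ Finset.univ \ {i} →
      ∃ lamc muc : ℝ,
        φ c t1 = lamc * φ Finset.univ t1 + (1 - lamc) * φ br t1 ∧
        φ c t0 = muc * φ Finset.univ t0 + (1 - muc) * φ br t0 ∧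
        mu1 / lam1 * lamc < muc ∧
        (1 - mu2) / (1 - lam2) * lamc + (mu2 - lam2) / (1 - lam2) < muc ∧
        lam1 ≤ lamc ∧ muc ≤ mu2)
    (hlam2 : lam2 < 1) (hmu2 : mu2 < 1) (hlam : lam1 < lam2)
    (hbh_below : (1 - mu2) * lam1 + (mu2 - lam2) < (1 - lam2) * mu1) (c : Bundle n)
    (hbc : br ⊆ c) (hcbr : c ≠ br) (hcU : c ≠ Finset.univ) (hcwh : c ≠ Finset.univ \ {i}) :
    ∃ l m, HasWeights φ t0 t1 br Finset.univ c l m ∧ l ≤ lam2 ∧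
      (1 - mu2) * l + (mu2 - lam2) < (1 - lam2) * m := by
  by_cases hcbh : c = insert i br
  · subst hcbh
    exact ⟨lam1, mu1, hbh, hlam.le, hbh_below⟩
  obtain ⟨l, m, h₁, h₀, -, hlm, -, hm⟩ := hother c (ssubset_of_subset_of_ne hbc (Ne.symm hcbr))
    (Finset.ssubset_univ_iff.2 hcU) hcbh hcwh
  have h1lam2 : 0 < 1 - lam2 := sub_pos.2 hlam2
  rw [div_mul_eq_mul_div, ← add_div, div_lt_iff₀ h1lam2] at hlm
  refine ⟨l, m, ⟨h₁, h₀⟩, ?_, by linarith⟩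
  nlinarith [mul_le_mul_of_nonneg_left hm h1lam2.le]

end Tree

theorem stmt14_general {n : ℕ} (t0 t1 : ℝ) (ht : t0 < t1)
    (φ : Bundle n → ℝ → ℝ)
    (hcont : ∀ b : Bundle n, ContinuousOn (φ b) (Set.Icc t0 t1))
    (hscd : SCDstar φ t0 t1)
    (hempty : ∀ t ∈ Set.Icc t0 t1, φ (∅ : Bundle n) t = 0)
    (hneg : ∀ b : Bundle n, b ≠ ∅ → φ b t0 < 0)
    (hpos : ∀ b : Bundle n, b ≠ ∅ → 0 < φ b t1)
    (tz : Bundle n → ℝ)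
    (htz_mem : ∀ b : Bundle n, b ≠ ∅ → tz b ∈ Set.Ioo t0 t1)
    (htz_zero : ∀ b : Bundle n, b ≠ ∅ → φ b (tz b) = 0)
    (htz_uniq : ∀ b : Bundle n, b ≠ ∅ → ∀ s ∈ Set.Icc t0 t1, φ b s = 0 → s = tz b)
    (br : Bundle n) (hbr : br ≠ ∅)
    (hroot1 : ∀ b : Bundle n, b ≠ ∅ → b ≠ br → tz br < tz b)
    (hroot2 : ∀ b : Bundle n, ¬ br ⊆ b → φ b t1 < φ br t1)
    (hmono : ∀ b1 b2 : Bundle n, br ⊆ b1 → b1 ⊂ b2 → b2 ⊆ Finset.univ →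
      φ b1 t1 < φ b2 t1)
    (i : Fin n) (hi : i ∉ br)
    (lam1 lam2 mu1 mu2 : ℝ)
    (hlam1 : lam1 ∈ Set.Ioo (0 : ℝ) 1) (hlam2 : lam2 ∈ Set.Ioo (0 : ℝ) 1)
    (hmu1 : mu1 ∈ Set.Ioo (0 : ℝ) 1) (hmu2 : mu2 ∈ Set.Ioo (0 : ℝ) 1)
    (heq1 : φ (insert i br) t1 = lam1 * φ Finset.univ t1 + (1 - lam1) * φ br t1)
    (heq2 : φ (Finset.univ \ {i}) t1 = lam2 * φ Finset.univ t1 + (1 - lam2) * φ br t1)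
    (heq3 : φ (insert i br) t0 = mu1 * φ Finset.univ t0 + (1 - mu1) * φ br t0)
    (heq4 : φ (Finset.univ \ {i}) t0 = mu2 * φ Finset.univ t0 + (1 - mu2) * φ br t0)
    (hlam_lt : lam1 < lam2)
    (hineq1 : mu1 / lam1 < (mu2 - mu1) / (lam2 - lam1))
    (hineq2 : (mu2 - mu1) / (lam2 - lam1) < (1 - mu2) / (1 - lam2))
    (hother : ∀ c : Bundle n, br ⊂ c → c ⊂ Finset.univ →
      c ≠ insert i br → c ≠ Finset.univ \ {i} →
      ∃ lamc muc : ℝ,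
        φ c t1 = lamc * φ Finset.univ t1 + (1 - lamc) * φ br t1 ∧
        φ c t0 = muc * φ Finset.univ t0 + (1 - muc) * φ br t0 ∧
        mu1 / lam1 * lamc < muc ∧
        (1 - mu2) / (1 - lam2) * lamc + (mu2 - lam2) / (1 - lam2) < muc ∧
        lam1 ≤ lamc ∧ muc ≤ mu2) :
    ∀ S : Finset (Bundle n), MinimalOptimalMenu φ t0 t1 S → IsTreeMenu S := by
  intro S hS
  have hr : tz br ∈ Icc t0 t1 := Ioo_subset_Icc_self (htz_mem br hbr)
  have hneg' : ∀ c : Bundle n, c ≠ ∅ → ∀ t ∈ Icc t0 t1, t < tz c → φ c t < 0 := fun c hc t ht =>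
    ((hcont c).sign_of_unique_zero (hneg c hc) (hpos c hc) (htz_uniq c hc) ht).1
  have hbr_pos : ∀ t ∈ Icc t0 t1, tz br < t → 0 < φ br t := fun t ht =>
    ((hcont br).sign_of_unique_zero (hneg br hbr) (hpos br hbr) (htz_uniq br hbr) ht).2
  have hfirst : ∀ c : Bundle n, c ≠ ∅ → c ≠ br → φ c (tz br) < φ br (tz br) := fun c hc hcbr =>
    htz_zero br hbr ▸ hneg' c hc _ hr (hroot1 c hc hcbr)
  have hbelow := lt_of_not_subset hscd hempty hr hbr_pos hfirst hroot2
  have hUbr : br ≠ Finset.univ := fun h => hi (h ▸ Finset.mem_univ i)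
  have hUr := hfirst Finset.univ (Finset.univ_nonempty_iff.2 ⟨i⟩).ne_empty hUbr.symm
  have hD₁ : φ br t1 < φ Finset.univ t1 :=
    hmono br Finset.univ le_rfl (Finset.ssubset_univ_iff.2 hUbr) le_rfl
  have hD₀ : φ Finset.univ t0 < φ br t0 :=
    sub_neg.1 <| (hscd.singleCrossingOn_sub _ br).neg_of_le_of_neg hr (left_mem_Icc.2 ht.le) hr.1
      (sub_neg.2 hUr) (sub_nonneg.2 hD₁.le)
  obtain ⟨hmu1lam1, hmu2lam2, hwh_above, hbh_below⟩ :=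
    below_chords_of_slope_lt hlam1.1 hlam_lt hlam2.2 hineq1 hineq2
  have hbhS : insert i br ∈ S := hS.1.mem_of_lower_crossing hcont hscd hr hbelow
    (hfirst _ (Finset.insert_ne_empty i br) fun h => hi (h ▸ Finset.mem_insert_self i br))
    hD₁ hD₀ ⟨heq1, heq3⟩ hlam1.1 hmu1.1
    (exists_weights_above_chord_insert ⟨heq2, heq4⟩ hother hlam1 hlam_lt hmu1lam1 hwh_above)
  have hwhS : Finset.univ \ {i} ∈ S := hS.1.mem_of_upper_crossing hcont hscd hr hbelow hUr hD₁
    hD₀ ⟨heq2, heq4⟩ hlam2 hmu2.2 hmu2lam2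
    (exists_weights_above_chord_sdiff ⟨heq1, heq3⟩ hother hlam2.2 hmu2.2 hlam_lt hbh_below)
  have hwh : Finset.univ \ {i} ≠ br := fun h => by rw [h] at heq2; nlinarith [hlam2.1]
  have hbrS := hS.1.mem_of_first_zero hempty ⟨hr.1, (htz_mem br hbr).2⟩ hbr_pos hroot1 hneg'
  have hroot := hS.subset_of_mem hempty hroot1 hneg' hbelow
  refine ⟨⟨br, hbrS, hbr, hroot⟩, _, hbhS, _, hwhS, fun h => ?_,
    fun h => hwh (Finset.univ_sdiff_singleton_eq_of_subset_insert hi h)⟩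
  simpa using h (Finset.mem_insert_self i br)

/-- **Theorem 34 (tree bundling via a least-favorite good).** Under MD, SCD*, the
boundary assumptions, the root conditions, monotonicity of the top type's valuation
above the root, the existence of a least-favorite good i outside the root, and the
stated conditions on the coefficients λ1, λ2, μ1, μ2 and on all other intermediate
bundles, the minimal optimal menu is a tree menu. -/
theorem stmt14 {n : ℕ} (hn : 1 ≤ n) (t0 t1 : ℝ) (ht : t0 < t1)
    (φ : Bundle n → ℝ → ℝ)
    (hcont : ∀ b : Bundle n, ContinuousOn (φ b) (Set.Icc t0 t1))
    (hdist : Distinct φ t0 t1)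
    (hmd : MD φ t0 t1)
    (hscd : SCDstar φ t0 t1)
    (hempty : ∀ t ∈ Set.Icc t0 t1, φ (∅ : Bundle n) t = 0)
    (hneg : ∀ b : Bundle n, b ≠ ∅ → φ b t0 < 0)
    (hpos : ∀ b : Bundle n, b ≠ ∅ → 0 < φ b t1)
    (tz : Bundle n → ℝ)
    (htz_mem : ∀ b : Bundle n, b ≠ ∅ → tz b ∈ Set.Ioo t0 t1)
    (htz_zero : ∀ b : Bundle n, b ≠ ∅ → φ b (tz b) = 0)
    (htz_uniq : ∀ b : Bundle n, b ≠ ∅ → ∀ s ∈ Set.Icc t0 t1, φ b s = 0 → s = tz b)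
    (br : Bundle n) (hbr : br ≠ ∅)
    (hroot1 : ∀ b : Bundle n, b ≠ ∅ → b ≠ br → tz br < tz b)
    (hroot2 : ∀ b : Bundle n, ¬ br ⊆ b → φ b t1 < φ br t1)
    (hmono : ∀ b1 b2 : Bundle n, br ⊆ b1 → b1 ⊂ b2 → b2 ⊆ Finset.univ →
      φ b1 t1 < φ b2 t1)
    (i : Fin n) (hi : i ∉ br)
    (hleast1 : ∀ j : Fin n, j ≠ i →
      φ (Finset.univ \ {j}) t1 < φ (Finset.univ \ {i}) t1)
    (hleast2 : ∀ j : Fin n, j ∉ br → j ≠ i →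
      φ (insert i br) t1 < φ (insert j br) t1)
    (lam1 lam2 mu1 mu2 : ℝ)
    (hlam1 : lam1 ∈ Set.Ioo (0 : ℝ) 1) (hlam2 : lam2 ∈ Set.Ioo (0 : ℝ) 1)
    (hmu1 : mu1 ∈ Set.Ioo (0 : ℝ) 1) (hmu2 : mu2 ∈ Set.Ioo (0 : ℝ) 1)
    (heq1 : φ (insert i br) t1 = lam1 * φ Finset.univ t1 + (1 - lam1) * φ br t1)
    (heq2 : φ (Finset.univ \ {i}) t1 = lam2 * φ Finset.univ t1 + (1 - lam2) * φ br t1)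
    (heq3 : φ (insert i br) t0 = mu1 * φ Finset.univ t0 + (1 - mu1) * φ br t0)
    (heq4 : φ (Finset.univ \ {i}) t0 = mu2 * φ Finset.univ t0 + (1 - mu2) * φ br t0)
    (hlam_lt : lam1 < lam2)
    (hineq1 : mu1 / lam1 < (mu2 - mu1) / (lam2 - lam1))
    (hineq2 : (mu2 - mu1) / (lam2 - lam1) < (1 - mu2) / (1 - lam2))
    (hother : ∀ c : Bundle n, br ⊂ c → c ⊂ Finset.univ →
      c ≠ insert i br → c ≠ Finset.univ \ {i} →
      ∃ lamc muc : ℝ,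
        φ c t1 = lamc * φ Finset.univ t1 + (1 - lamc) * φ br t1 ∧
        φ c t0 = muc * φ Finset.univ t0 + (1 - muc) * φ br t0 ∧
        mu1 / lam1 * lamc < muc ∧
        (1 - mu2) / (1 - lam2) * lamc + (mu2 - lam2) / (1 - lam2) < muc ∧
        lam1 ≤ lamc ∧ muc ≤ mu2) :
    ∀ S : Finset (Bundle n), MinimalOptimalMenu φ t0 t1 S → IsTreeMenu S :=
  stmt14_general t0 t1 ht φ hcont hscd hempty hneg hpos tz htz_mem htz_zero htz_uniq br hbr hroot1
    hroot2 hmono i hi lam1 lam2 mu1 mu2 hlam1 hlam2 hmu1 hmu2 heq1 heq2 heq3 heq4 hlam_lt hineq1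
    hineq2 hother

end Paper
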